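/- arXiv:1105.0489 — 3 statements merged into one kernel-verified Lean document; each statement's English description precedes it below -/
import Mathlib

section
/- Let (A_n)_{n≥1} and (L_n)_{n≥0} be sequences in a (possibly noncommutative) ℚ-algebra related by the recursion L_n = A_{n+1} + ∑_{ℓ=1}^{n} (B_ℓ/ℓ!) ∑_{n_1+⋯+n_ℓ+n_{ℓ+1} = n-ℓ} L_{n_1}⋯L_{n_ℓ} A_{n_{ℓ+1}+1}, where B_ℓ are Bernoulli numbers. Then the inverse relation A_n = ∑_{ℓ=1}^{n} (1/ℓ!) ∑_{n_1+⋯+n_ℓ = n-ℓ} L_{n_1}⋯L_{n_ℓ} holds for all n ≥ 1. -/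
/-!
Put `u = X · L(X)`. Since `u` has no constant term and the rational scalars are central, every
rational power series `f` can be evaluated at `u`, and `f ↦ f(u)` is multiplicative even though
the algebra is not commutative: `f(u)` only involves powers of the single element `u`. In this
language the recursion reads `L = B(u) · Ã` with `B(x) = x / (eˣ - 1)`, so
`B(u) · (X · Ã) = X · L = u`. Multiplying by `B⁻¹(u)` gives `X · Ã = (B⁻¹ · X)(u) = (eˣ - 1)(u)`,
whose coefficients are the claimed sums.
-/

open PowerSeries Finset

theorem Finset.Nat.sum_antidiagonalTuple_succ {M : Type*} [AddCommMonoid M] (k n : ℕ)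
    (f : (Fin (k + 1) → ℕ) → M) :
    ∑ t ∈ Nat.antidiagonalTuple (k + 1) n, f t =
      ∑ p ∈ antidiagonal n, ∑ s ∈ Nat.antidiagonalTuple k p.2, f (Fin.cons p.1 s) := by
  rw [sum_sigma']
  refine sum_nbij' (fun t : Fin (k + 1) → ℕ => ⟨(t 0, ∑ i : Fin k, t i.succ), Fin.tail t⟩)
    (fun x => Fin.cons x.1.1 x.2) ?_ ?_ (fun t _ => Fin.cons_self_tail t) ?_
    (fun t _ => by rw [Fin.cons_self_tail])
  · intro t ht
    rw [Nat.mem_antidiagonalTuple, Fin.sum_univ_succ] at ht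
    simpa [HasAntidiagonal.mem_antidiagonal, Nat.mem_antidiagonalTuple, Fin.tail] using ht
  · rintro ⟨⟨a, b⟩, s⟩ hx
    simp only [mem_sigma, HasAntidiagonal.mem_antidiagonal, Nat.mem_antidiagonalTuple] at hx ⊢
    rw [Fin.sum_cons, hx.2, hx.1]
  · rintro ⟨⟨a, b⟩, s⟩ hx
    have hb : ∑ i, s i = b := Nat.mem_antidiagonalTuple.mp (mem_sigma.mp hx).2
    subst hb
    simp

namespace PowerSeries

variable {R : Type*} [Ring R]

theorem coeff_prod_ofFn {k : ℕ} (f : Fin k → R⟦X⟧) (n : ℕ) :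
    coeff n (List.ofFn f).prod =
      ∑ t ∈ Finset.Nat.antidiagonalTuple k n, (List.ofFn fun i => coeff (t i) (f i)).prod := by
  induction k generalizing n with
  | zero => cases n <;> simp [coeff_one]
  | succ k ih =>
    rw [List.ofFn_succ, List.prod_cons, coeff_mul, Finset.Nat.sum_antidiagonalTuple_succ]
    refine sum_congr rfl fun p _ => ?_
    rw [ih, mul_sum]
    simp [List.ofFn_succ]

theorem coeff_mk_pow (L : ℕ → R) (ℓ n : ℕ) :
    coeff n (mk L ^ ℓ) =
      ∑ t ∈ Finset.Nat.antidiagonalTuple ℓ n, (List.ofFn fun i : Fin ℓ => L (t i)).prod := by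
  simp [← List.prod_replicate, ← List.ofFn_const, coeff_prod_ofFn]

theorem coeff_mk_pow_mul_mk (L g : ℕ → R) (ℓ n : ℕ) :
    coeff n (mk L ^ ℓ * mk g) =
      ∑ t ∈ Finset.Nat.antidiagonalTuple (ℓ + 1) n,
        (List.ofFn fun i : Fin ℓ => L (t i.castSucc)).prod * g (t (Fin.last ℓ)) := by
  have hsnoc : mk L ^ ℓ * mk g =
      (List.ofFn (Fin.snoc (fun _ => mk L) (mk g) : Fin (ℓ + 1) → R⟦X⟧)).prod := by
    rw [List.ofFn_succ', List.prod_concat]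
    simp
  rw [hsnoc, coeff_prod_ofFn]
  refine sum_congr rfl fun t _ => ?_
  rw [List.ofFn_succ', List.prod_concat]
  simp

theorem coeff_X_mul_pow_mul (v g : R⟦X⟧) (ℓ n : ℕ) :
    coeff n ((X * v) ^ ℓ * g) = if ℓ ≤ n then coeff (n - ℓ) (v ^ ℓ * g) else 0 := by
  rw [(commute_X v).symm.mul_pow, mul_assoc, coeff_X_pow_mul']

section evalSeries

variable {K : Type*} [CommRing K] [Algebra K R] {u : R⟦X⟧}

/-- `f(u)`, read off coefficientwise from truncations of `f`. This is meaningful only when `u` has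
no constant term, so that `uᵐ` with `m > n` does not contribute to the coefficient of `Xⁿ`. -/
noncomputable def evalSeries (u : R⟦X⟧) (f : K⟦X⟧) : R⟦X⟧ :=
  mk fun n => coeff n (Polynomial.aeval u (trunc (n + 1) f))

theorem coeff_aeval_eq_zero (hu : constantCoeff u = 0) {p : Polynomial K} {n : ℕ}
    (hp : ∀ m ≤ n, p.coeff m = 0) : coeff n (Polynomial.aeval u p) = 0 := by
  obtain ⟨q, rfl⟩ := Polynomial.X_pow_dvd_iff.mpr fun m hm => hp m (Nat.lt_succ_iff.mp hm)
  obtain ⟨v, rfl⟩ := X_dvd_iff.mpr hu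
  rw [map_mul, map_pow, Polynomial.aeval_X, (commute_X v).symm.mul_pow, mul_assoc]
  exact X_pow_dvd_iff.mp (dvd_mul_right _ _) n n.lt_succ_self

theorem coeff_aeval_congr (hu : constantCoeff u = 0) {p q : Polynomial K} {n : ℕ}
    (h : ∀ m ≤ n, p.coeff m = q.coeff m) :
    coeff n (Polynomial.aeval u p) = coeff n (Polynomial.aeval u q) := by
  rw [← sub_eq_zero, ← map_sub, ← map_sub]
  exact coeff_aeval_eq_zero hu fun m hm => by rw [Polynomial.coeff_sub, h m hm, sub_self]

theorem coeff_evalSeries_of_lt (hu : constantCoeff u = 0) (f : K⟦X⟧) {n N : ℕ} (h : n < N) :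
    coeff n (evalSeries u f) = coeff n (Polynomial.aeval u (trunc N f)) := by
  rw [evalSeries, coeff_mk]
  refine coeff_aeval_congr hu fun m hm => ?_
  rw [coeff_trunc, coeff_trunc, if_pos (by omega), if_pos (by omega)]

theorem evalSeries_mul (hu : constantCoeff u = 0) (f g : K⟦X⟧) :
    evalSeries u (f * g) = evalSeries u f * evalSeries u g := by
  ext n
  have htrunc : ∀ p ∈ antidiagonal n, coeff p.1 (evalSeries u f) * coeff p.2 (evalSeries u g) =
      coeff p.1 (Polynomial.aeval u (trunc (n + 1) f)) *
        coeff p.2 (Polynomial.aeval u (trunc (n + 1) g)) := by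
    intro p hp
    have := HasAntidiagonal.mem_antidiagonal.mp hp
    rw [coeff_evalSeries_of_lt hu f (N := n + 1) (by omega),
      coeff_evalSeries_of_lt hu g (N := n + 1) (by omega)]
  rw [coeff_mul, sum_congr rfl htrunc, ← coeff_mul, ← map_mul, evalSeries, coeff_mk]
  refine coeff_aeval_congr hu fun m hm => ?_
  rw [coeff_trunc, if_pos (by omega), ← Polynomial.coeff_coe, Polynomial.coe_mul,
    coeff_mul_eq_coeff_trunc_mul_trunc f g (by omega : m < n + 1)]

theorem evalSeries_one : evalSeries u (1 : K⟦X⟧) = 1 := by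
  ext n
  rw [evalSeries, coeff_mk, trunc_one, map_one]

theorem evalSeries_X (hu : constantCoeff u = 0) : evalSeries u (X : K⟦X⟧) = u := by
  ext n
  rw [coeff_evalSeries_of_lt hu X (Nat.lt_add_of_pos_right two_pos), trunc_X, Polynomial.aeval_X]

theorem coeff_evalSeries_mul (hu : constantCoeff u = 0) (f : K⟦X⟧) (g : R⟦X⟧) (n : ℕ) :
    coeff n (evalSeries u f * g) = ∑ ℓ ∈ range (n + 1), coeff ℓ f • coeff n (u ^ ℓ * g) := by
  have htrunc : ∀ p ∈ antidiagonal n, coeff p.1 (evalSeries u f) * coeff p.2 g =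
      coeff p.1 (Polynomial.aeval u (trunc (n + 1) f)) * coeff p.2 g := by
    intro p hp
    have := HasAntidiagonal.mem_antidiagonal.mp hp
    rw [coeff_evalSeries_of_lt hu f (N := n + 1) (by omega)]
  rw [coeff_mul, sum_congr rfl htrunc, ← coeff_mul, Polynomial.aeval_def,
    eval₂_trunc_eq_sum_range, sum_mul, map_sum]
  simp [← Algebra.smul_def]

end evalSeries

variable [Algebra ℚ R]

theorem X_mul_eq_evalSeries_exp_sub_one {v a : R⟦X⟧}
    (h : v = evalSeries (X * v) (bernoulliPowerSeries ℚ) * a) :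
    X * a = evalSeries (X * v) (exp ℚ - 1) := by
  set u := X * v
  have hu : constantCoeff u = 0 := by simp [u]
  set B := bernoulliPowerSeries ℚ
  have hB : B⁻¹ * B = 1 := PowerSeries.inv_mul_cancel B (by simp [B, bernoulliPowerSeries])
  calc X * a = evalSeries u (B⁻¹ * B) * (X * a) := by rw [hB, evalSeries_one, one_mul]
    _ = evalSeries u B⁻¹ * (X * (evalSeries u B * a)) := by
      rw [evalSeries_mul hu, mul_assoc, ← mul_assoc X, ← (commute_X (evalSeries u B)).eq,
        mul_assoc]
    _ = evalSeries u (B⁻¹ * X) := by rw [← h, evalSeries_mul hu, evalSeries_X hu]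
    _ = evalSeries u (exp ℚ - 1) := by
      rw [← bernoulliPowerSeries_mul_exp_sub_one, ← mul_assoc, hB, one_mul]

theorem mk_eq_evalSeries_bernoulliPowerSeries_mul {L A : ℕ → R}
    (hrec : ∀ n : ℕ, L n = A (n + 1) +
      ∑ ℓ ∈ Icc 1 n, (bernoulli ℓ / (ℓ.factorial : ℚ)) •
        ∑ t ∈ Finset.Nat.antidiagonalTuple (ℓ + 1) (n - ℓ),
          (List.ofFn fun i : Fin ℓ => L (t i.castSucc)).prod * A (t (Fin.last ℓ) + 1)) :
    mk L = evalSeries (X * mk L) (bernoulliPowerSeries ℚ) * mk fun k => A (k + 1) := by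
  ext n
  rw [coeff_mk, hrec n, coeff_evalSeries_mul (by simp), range_eq_Ico,
    sum_eq_sum_Ico_succ_bot (Nat.add_one_pos n), zero_add, Ico_add_one_right_eq_Icc]
  congr 1
  · simp [bernoulliPowerSeries]
  · refine sum_congr rfl fun ℓ hℓ => ?_
    rw [coeff_X_mul_pow_mul, if_pos (mem_Icc.mp hℓ).2, coeff_mk_pow_mul_mk]
    simp [bernoulliPowerSeries]

theorem coeff_evalSeries_exp_sub_one (L : ℕ → R) (n : ℕ) :
    coeff n (evalSeries (X * mk L) (exp ℚ - 1)) =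
      ∑ ℓ ∈ Icc 1 n, ((1 : ℚ) / (ℓ.factorial : ℚ)) •
        ∑ t ∈ Finset.Nat.antidiagonalTuple ℓ (n - ℓ),
          (List.ofFn fun i : Fin ℓ => L (t i)).prod := by
  rw [← mul_one (evalSeries _ _), coeff_evalSeries_mul (by simp), range_eq_Ico,
    sum_eq_sum_Ico_succ_bot (Nat.add_one_pos n), zero_add, Ico_add_one_right_eq_Icc]
  have hexp : coeff 0 (exp ℚ - 1) = 0 := by simp
  rw [hexp, zero_smul, zero_add]
  refine sum_congr rfl fun ℓ hℓ => ?_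
  obtain ⟨hℓ1, hℓn⟩ := mem_Icc.mp hℓ
  rw [coeff_X_mul_pow_mul, if_pos hℓn, mul_one, coeff_mk_pow, map_sub, coeff_exp, coeff_one,
    if_neg (by omega), sub_zero, Algebra.algebraMap_self, RingHom.id_apply]

end PowerSeries

/-- Inverse relation between the modified generator coefficients `L_n` and the one-step
expansion coefficients `A_n` in a (possibly noncommutative) `ℚ`-algebra: if
`L_n = A_{n+1} + ∑_{ℓ=1}^n (B_ℓ/ℓ!) ∑_{n_1+⋯+n_{ℓ+1}=n-ℓ} L_{n_1}⋯L_{n_ℓ} A_{n_{ℓ+1}+1}`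
(`B_ℓ` the Bernoulli numbers with `B_1 = -1/2`), then for all `n ≥ 1`,
`A_n = ∑_{ℓ=1}^n (1/ℓ!) ∑_{n_1+⋯+n_ℓ=n-ℓ} L_{n_1}⋯L_{n_ℓ}`. -/
theorem stmt1 {R : Type*} [Ring R] [Algebra ℚ R] (L : ℕ → R) (A : ℕ → R)
    (hrec : ∀ n : ℕ, L n = A (n + 1) +
      ∑ ℓ ∈ Finset.Icc 1 n, (bernoulli ℓ / (Nat.factorial ℓ : ℚ)) •
        ∑ t ∈ Finset.Nat.antidiagonalTuple (ℓ + 1) (n - ℓ),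
          (List.ofFn fun i : Fin ℓ => L (t i.castSucc)).prod * A (t (Fin.last ℓ) + 1)) :
    ∀ n : ℕ, 1 ≤ n →
      A n = ∑ ℓ ∈ Finset.Icc 1 n, ((1 : ℚ) / (Nat.factorial ℓ : ℚ)) •
        ∑ t ∈ Finset.Nat.antidiagonalTuple ℓ (n - ℓ),
          (List.ofFn fun i : Fin ℓ => L (t i)).prod := by
  intro n hn
  obtain ⟨m, rfl⟩ := Nat.exists_eq_add_of_le' hn
  rw [← coeff_evalSeries_exp_sub_one, ← X_mul_eq_evalSeries_exp_sub_one
    (mk_eq_evalSeries_bernoulliPowerSeries_mul hrec), coeff_succ_X_mul, coeff_mk]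
end

section
/- Let (L_ℓ)_{ℓ≥0} be linear operators and define, for tuples of functions, F_n(t) = ∑_{ℓ=1}^{n} L_ℓ v_{n-ℓ}(t) where v_n solve ∂_t v_n = L_0 v_n + F_n with v_0(0) = φ and v_n(0) = 0 for n ≥ 1. Suppose (μ_m)_{m≥0} satisfy the adjoint recursion ∑_{m=0}^{k} L_m^* μ_{k-m} = 0 for all k ≥ 0, where ⟨L_ℓ v, μ⟩ = ⟨v, L_ℓ^* μ⟩ for a bilinear pairing ⟨·,·⟩. Then for each n, the quantity c_n(t) = ∑_{m=0}^{n} ⟨v_{n-m}(t), μ_m⟩ is constant in time. -/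
/-!
Differentiating `c_n(t) = ∑_{m ≤ n} ⟨v_{n-m}(t), μ_m⟩` and moving every `L_ℓ` onto `μ` through
the pairing gives a triple convolution `∑_{ℓ + k + m = n} ⟨v_k, L_ℓ^* μ_m⟩`. Regrouping it by
`j = ℓ + m` factors out `∑_{ℓ + m = j} L_ℓ^* μ_m`, which vanishes by the adjoint recursion, so
`c_n' = 0`.
-/

open Finset

lemma Finset.sum_range_succ_sub_comm {M : Type*} [AddCommMonoid M] (f : ℕ → ℕ → M) (k : ℕ) :
    ∑ m ∈ range (k + 1), f (k - m) m = ∑ m ∈ range (k + 1), f m (k - m) := by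
  rw [← Nat.sum_antidiagonal_eq_sum_range_succ f, ← Nat.sum_antidiagonal_swap,
    Nat.sum_antidiagonal_eq_sum_range_succ_mk]
  rfl

section Pairing

variable {V W : Type*} [AddCommGroup V] [Module ℝ V] [AddCommGroup W] [Module ℝ W]
  (B : V →ₗ[ℝ] W →ₗ[ℝ] ℝ) (L : ℕ → V →ₗ[ℝ] V) (Lstar : ℕ → W →ₗ[ℝ] W) (μ : ℕ → W)

lemma sum_pairing_convolution_eq_zero
    (hadj : ∀ ℓ (x : V) (y : W), B (L ℓ x) y = B x (Lstar ℓ y))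
    (hrec : ∀ k : ℕ, ∑ m ∈ range (k + 1), Lstar m (μ (k - m)) = 0) (x : ℕ → V) (n : ℕ) :
    ∑ m ∈ range (n + 1), B (∑ ℓ ∈ range (n - m + 1), L ℓ (x (n - m - ℓ))) (μ m) = 0 := by
  have hrec' (j : ℕ) : ∑ m ∈ range (j + 1), Lstar (j - m) (μ m) = 0 := by
    rw [sum_range_succ_sub_comm (fun a b => Lstar a (μ b))]
    exact hrec j
  calc ∑ m ∈ range (n + 1), B (∑ ℓ ∈ range (n - m + 1), L ℓ (x (n - m - ℓ))) (μ m)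
      = ∑ m ∈ range (n + 1), ∑ ℓ ∈ range (n + 1 - m),
          B (x (n - (m + ℓ))) (Lstar ℓ (μ m)) := by
        refine sum_congr rfl fun m hm => ?_
        rw [Nat.sub_add_comm (Nat.lt_succ_iff.mp (mem_range.mp hm)), map_sum,
          LinearMap.coe_sum, Finset.sum_apply]
        simp only [hadj, Nat.sub_sub]
    _ = ∑ j ∈ range (n + 1), ∑ m ∈ range (j + 1), B (x (n - j)) (Lstar (j - m) (μ m)) := by
        rw [← sum_range_diag_flip]
        refine sum_congr rfl fun j _ => sum_congr rfl fun m hm => ?_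
        rw [Nat.add_sub_cancel' (Nat.lt_succ_iff.mp (mem_range.mp hm))]
    _ = 0 := by
        simp only [← map_sum, hrec', map_zero, sum_const_zero]

lemma hasDerivAt_sum_pairing_eq_zero (v : ℕ → ℝ → V)
    (hadj : ∀ ℓ (x : V) (y : W), B (L ℓ x) y = B x (Lstar ℓ y))
    (hrec : ∀ k : ℕ, ∑ m ∈ range (k + 1), Lstar m (μ (k - m)) = 0)
    (hderiv : ∀ n m t, HasDerivAt (fun s => B (v n s) (μ m))
      (B (∑ ℓ ∈ range (n + 1), L ℓ (v (n - ℓ) t)) (μ m)) t) (n : ℕ) (t : ℝ) :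
    HasDerivAt (fun s => ∑ m ∈ range (n + 1), B (v (n - m) s) (μ m)) 0 t := by
  have h := HasDerivAt.fun_sum fun m (_ : m ∈ range (n + 1)) => hderiv (n - m) m t
  rwa [sum_pairing_convolution_eq_zero B L Lstar μ hadj hrec (v · t) n] at h

end Pairing

/-- Conservation law for the correctors: if the curves `v_n` solve
`∂_t v_n = L_0 v_n + ∑_{ℓ=1}^n L_ℓ v_{n-ℓ}` (differentiation being valid under the pairing
`⟨·,·⟩ = B`), the operators `L_ℓ*` are adjoint to `L_ℓ` with respect to `B`, and the `μ_m`
satisfy the adjoint recursion `∑_{m=0}^k L_m* μ_{k-m} = 0` for all `k`, then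
`c_n(t) = ∑_{m=0}^n ⟨v_{n-m}(t), μ_m⟩` is constant in time. -/
theorem stmt5 {V W : Type*} [AddCommGroup V] [Module ℝ V] [AddCommGroup W] [Module ℝ W]
    (B : V →ₗ[ℝ] W →ₗ[ℝ] ℝ) (L : ℕ → V →ₗ[ℝ] V) (Lstar : ℕ → W →ₗ[ℝ] W)
    (v : ℕ → ℝ → V) (μ : ℕ → W)
    (hadj : ∀ ℓ (x : V) (y : W), B (L ℓ x) y = B x (Lstar ℓ y))
    (hrec : ∀ k : ℕ, ∑ m ∈ Finset.range (k + 1), Lstar m (μ (k - m)) = 0)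
    (hderiv : ∀ n m t, HasDerivAt (fun s => B (v n s) (μ m))
      (B (∑ ℓ ∈ Finset.range (n + 1), L ℓ (v (n - ℓ) t)) (μ m)) t) :
    ∀ n : ℕ, ∀ t : ℝ,
      ∑ m ∈ Finset.range (n + 1), B (v (n - m) t) (μ m) =
      ∑ m ∈ Finset.range (n + 1), B (v (n - m) 0) (μ m) := by
  intro n t
  have hc := hasDerivAt_sum_pairing_eq_zero B L Lstar μ v hadj hrec hderiv n
  exact is_const_of_deriv_eq_zero (fun s => (hc s).differentiableAt) (fun s => (hc s).deriv) t 0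
end

section
/- Suppose for each n ≥ 0 there are real sequences with: a_0(t) ≤ P_0(t)e^{-λt}·K and, recursively, a_n(t) ≤ ∑_{m=1}^{n} c_m · a_{n-m}(t) + ∫_0^t p(t-s) e^{-λ(t-s)} (∑_{ℓ=0}^{n-1} C_ℓ a_ℓ(s)) ds · K for nonnegative functions a_n, constants c_m, C_ℓ ≥ 0, polynomials P_0, p with nonnegative coefficients, λ > 0 and K ≥ 0. Then for each n there exists a polynomial P_n with nonnegative coefficients such that a_n(t) ≤ P_n(t) e^{-λt} K for all t ≥ 0. -/
/-!
Bound every term of the recursion by the same exponential `e^{-λt} K` times a polynomial.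
The terms `c_m a_{n-m}(t)` inherit such bounds from the induction hypothesis. In the
convolution the exponentials recombine, `e^{-λ(t-s)} e^{-λs} = e^{-λt}`, while polynomials
with nonnegative coefficients are nonnegative and monotone on `[0, ∞)`; so the integrand is
at most `p(t) Q(t) e^{-λt} K` on `[0, t]`, and the integral at most `t p(t) Q(t) e^{-λt} K`.
-/

open Polynomial Real Set

namespace Polynomial

variable (R : Type*) [Semiring R] [PartialOrder R] [IsOrderedRing R]

def nonnegCoeffs : Subsemiring R[X] where
  carrier := {P | ∀ i, 0 ≤ P.coeff i}
  zero_mem' := by simp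
  one_mem' i := by
    rw [coeff_one]
    split_ifs <;> simp
  add_mem' hP hQ i := by
    rw [coeff_add]
    exact add_nonneg (hP i) (hQ i)
  mul_mem' hP hQ i := by
    rw [coeff_mul]
    exact Finset.sum_nonneg fun x _ => mul_nonneg (hP x.1) (hQ x.2)

variable {R}

theorem X_mem_nonnegCoeffs : (X : R[X]) ∈ nonnegCoeffs R := fun i => by
  rw [coeff_X]
  split_ifs <;> simp

theorem smul_mem_nonnegCoeffs {a : R} (ha : 0 ≤ a) {P : R[X]} (hP : P ∈ nonnegCoeffs R) :
    a • P ∈ nonnegCoeffs R := fun i => by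
  rw [coeff_smul, smul_eq_mul]
  exact mul_nonneg ha (hP i)

theorem eval_nonneg_of_mem_nonnegCoeffs {P : R[X]} (hP : P ∈ nonnegCoeffs R) {x : R}
    (hx : 0 ≤ x) : 0 ≤ P.eval x := by
  rw [eval_eq_sum_range]
  exact Finset.sum_nonneg fun i _ => mul_nonneg (hP i) (pow_nonneg hx i)

theorem eval_le_eval_of_mem_nonnegCoeffs {P : R[X]} (hP : P ∈ nonnegCoeffs R) {x y : R}
    (hx : 0 ≤ x) (hxy : x ≤ y) : P.eval x ≤ P.eval y := by
  rw [eval_eq_sum_range, eval_eq_sum_range]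
  exact Finset.sum_le_sum fun i _ =>
    mul_le_mul_of_nonneg_left (pow_le_pow_left₀ hx hxy i) (hP i)

end Polynomial

def HasPolyExpBound (lam K : ℝ) (f : ℝ → ℝ) : Prop :=
  ∃ P ∈ nonnegCoeffs ℝ, ∀ t, 0 ≤ t → f t ≤ P.eval t * exp (-lam * t) * K

namespace HasPolyExpBound

variable {lam K : ℝ} {f g : ℝ → ℝ}

theorem zero : HasPolyExpBound lam K fun _ => 0 :=
  ⟨0, zero_mem _, fun t _ => by simp⟩

theorem add (hf : HasPolyExpBound lam K f) (hg : HasPolyExpBound lam K g) :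
    HasPolyExpBound lam K fun t => f t + g t := by
  obtain ⟨P, hP, hfP⟩ := hf
  obtain ⟨Q, hQ, hgQ⟩ := hg
  refine ⟨P + Q, add_mem hP hQ, fun t ht => ?_⟩
  rw [eval_add, add_mul, add_mul]
  exact add_le_add (hfP t ht) (hgQ t ht)

theorem finset_sum {ι : Type*} {s : Finset ι} {f : ι → ℝ → ℝ}
    (hf : ∀ i ∈ s, HasPolyExpBound lam K (f i)) :
    HasPolyExpBound lam K fun t => ∑ i ∈ s, f i t := by
  classical
  induction s using Finset.induction_on with
  | empty => simpa using zero
  | insert i s hi ih =>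
    simp_rw [Finset.sum_insert hi]
    exact (hf i (s.mem_insert_self i)).add (ih fun j hj => hf j (Finset.mem_insert_of_mem hj))

theorem const_mul {w : ℝ} (hw : 0 ≤ w) (hf : HasPolyExpBound lam K f) :
    HasPolyExpBound lam K fun t => w * f t := by
  obtain ⟨P, hP, hfP⟩ := hf
  refine ⟨w • P, smul_mem_nonnegCoeffs hw hP, fun t ht => ?_⟩
  calc w * f t ≤ w * (P.eval t * exp (-lam * t) * K) := mul_le_mul_of_nonneg_left (hfP t ht) hw
    _ = (w • P).eval t * exp (-lam * t) * K := by
        rw [eval_smul, smul_eq_mul]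
        ring

theorem mul_const {w : ℝ} (hw : 0 ≤ w) (hf : HasPolyExpBound lam K f) :
    HasPolyExpBound lam K fun t => f t * w := by
  simpa only [mul_comm] using hf.const_mul hw

theorem mono (hf : HasPolyExpBound lam K f) (hgf : ∀ t, 0 ≤ t → g t ≤ f t) :
    HasPolyExpBound lam K g := by
  obtain ⟨P, hP, hfP⟩ := hf
  exact ⟨P, hP, fun t ht => (hgf t ht).trans (hfP t ht)⟩

theorem convolution (hK : 0 ≤ K) {p : ℝ[X]} (hp : p ∈ nonnegCoeffs ℝ)
    (hf_nonneg : ∀ t, 0 ≤ t → 0 ≤ f t) (hf : HasPolyExpBound lam K f) :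
    HasPolyExpBound lam K fun t =>
      ∫ s in (0 : ℝ)..t, p.eval (t - s) * exp (-lam * (t - s)) * f s := by
  obtain ⟨Q, hQ, hfQ⟩ := hf
  refine ⟨X * p * Q, mul_mem (mul_mem X_mem_nonnegCoeffs hp) hQ, fun t ht => ?_⟩
  have hintegrand : ∀ s ∈ uIoc 0 t, ‖p.eval (t - s) * exp (-lam * (t - s)) * f s‖ ≤
      p.eval t * Q.eval t * exp (-lam * t) * K := by
    intro s hs
    rw [uIoc_of_le ht] at hs
    have hs0 : 0 ≤ s := hs.1.le
    have hts : 0 ≤ t - s := sub_nonneg.2 hs.2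
    have hfs := hf_nonneg s hs0
    have hpt := eval_nonneg_of_mem_nonnegCoeffs hp ht
    have hpts := eval_nonneg_of_mem_nonnegCoeffs hp hts
    have hexp : exp (-lam * (t - s)) * exp (-lam * s) = exp (-lam * t) := by
      rw [← exp_add]
      ring_nf
    rw [Real.norm_of_nonneg (by positivity)]
    calc p.eval (t - s) * exp (-lam * (t - s)) * f s
        ≤ p.eval t * exp (-lam * (t - s)) * (Q.eval s * exp (-lam * s) * K) := by
          gcongr
          · exact eval_le_eval_of_mem_nonnegCoeffs hp hts (by linarith)
          · exact hfQ s hs0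
      _ ≤ p.eval t * exp (-lam * (t - s)) * (Q.eval t * exp (-lam * s) * K) := by
          gcongr
          exact eval_le_eval_of_mem_nonnegCoeffs hQ hs0 hs.2
      _ = p.eval t * Q.eval t * exp (-lam * t) * K := by
          rw [← hexp]
          ring
  refine (Real.le_norm_self _).trans
    ((intervalIntegral.norm_integral_le_of_norm_le_const hintegrand).trans_eq ?_)
  rw [sub_zero, abs_of_nonneg ht, eval_mul, eval_mul, eval_X]
  ring

end HasPolyExpBound

theorem stmt10_general (lam K : ℝ) (hK : 0 ≤ K)
    (P0 p : Polynomial ℝ) (hP0 : ∀ i, 0 ≤ P0.coeff i) (hp : ∀ i, 0 ≤ p.coeff i)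
    (a : ℕ → ℝ → ℝ) (c C : ℕ → ℝ)
    (ha_nonneg : ∀ n t, 0 ≤ a n t)
    (hc : ∀ m, 0 ≤ c m) (hC : ∀ ℓ, 0 ≤ C ℓ)
    (h0 : ∀ t : ℝ, 0 ≤ t → a 0 t ≤ P0.eval t * Real.exp (-lam * t) * K)
    (hrec : ∀ n : ℕ, 1 ≤ n → ∀ t : ℝ, 0 ≤ t →
      a n t ≤ (∑ m ∈ Finset.Icc 1 n, c m * a (n - m) t) +
        (∫ s in (0 : ℝ)..t, p.eval (t - s) * Real.exp (-lam * (t - s)) *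
          (∑ ℓ ∈ Finset.range n, C ℓ * a ℓ s)) * K) :
    ∀ n : ℕ, ∃ P : Polynomial ℝ, (∀ i, 0 ≤ P.coeff i) ∧
      ∀ t : ℝ, 0 ≤ t → a n t ≤ P.eval t * Real.exp (-lam * t) * K := by
  show ∀ n, HasPolyExpBound lam K (a n)
  intro n
  induction n using Nat.strong_induction_on with
  | _ n ih =>
    obtain rfl | hn := Nat.eq_zero_or_pos n
    · exact ⟨P0, hP0, h0⟩
    have hlocal : HasPolyExpBound lam K fun t => ∑ m ∈ Finset.Icc 1 n, c m * a (n - m) t :=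
      HasPolyExpBound.finset_sum fun m hm =>
        (ih (n - m) (Nat.sub_lt hn (Finset.mem_Icc.1 hm).1)).const_mul (hc m)
    have hconv : HasPolyExpBound lam K fun t =>
        (∫ s in (0 : ℝ)..t, p.eval (t - s) * exp (-lam * (t - s)) *
          (∑ ℓ ∈ Finset.range n, C ℓ * a ℓ s)) * K :=
      (HasPolyExpBound.convolution hK hp
        (fun s _ => Finset.sum_nonneg fun ℓ _ => mul_nonneg (hC ℓ) (ha_nonneg ℓ s))
        (HasPolyExpBound.finset_sum fun ℓ hℓ =>
          (ih ℓ (Finset.mem_range.1 hℓ)).const_mul (hC ℓ))).mul_const hK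
    exact (hlocal.add hconv).mono (hrec n hn)

/-- Propagation of exponential decay through the recursion of Proposition 4.2: if
`a_0(t) ≤ P_0(t) e^{-λt} K` and recursively
`a_n(t) ≤ ∑_{m=1}^n c_m a_{n-m}(t) + (∫_0^t p(t-s) e^{-λ(t-s)} ∑_{ℓ=0}^{n-1} C_ℓ a_ℓ(s) ds) K`,
with nonnegative measurable functions `a_n`, nonnegative constants `c_m, C_ℓ`, polynomials
`P_0, p` with nonnegative coefficients, `λ > 0`, `K ≥ 0`, then every `a_n` satisfies
`a_n(t) ≤ P_n(t) e^{-λt} K` for some polynomial `P_n` with nonnegative coefficients. -/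
theorem stmt10 (lam K : ℝ) (hlam : 0 < lam) (hK : 0 ≤ K)
    (P0 p : Polynomial ℝ) (hP0 : ∀ i, 0 ≤ P0.coeff i) (hp : ∀ i, 0 ≤ p.coeff i)
    (a : ℕ → ℝ → ℝ) (c C : ℕ → ℝ)
    (ha_nonneg : ∀ n t, 0 ≤ a n t) (ha_meas : ∀ n, Measurable (a n))
    (hc : ∀ m, 0 ≤ c m) (hC : ∀ ℓ, 0 ≤ C ℓ)
    (h0 : ∀ t : ℝ, 0 ≤ t → a 0 t ≤ P0.eval t * Real.exp (-lam * t) * K)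
    (hrec : ∀ n : ℕ, 1 ≤ n → ∀ t : ℝ, 0 ≤ t →
      a n t ≤ (∑ m ∈ Finset.Icc 1 n, c m * a (n - m) t) +
        (∫ s in (0 : ℝ)..t, p.eval (t - s) * Real.exp (-lam * (t - s)) *
          (∑ ℓ ∈ Finset.range n, C ℓ * a ℓ s)) * K) :
    ∀ n : ℕ, ∃ P : Polynomial ℝ, (∀ i, 0 ≤ P.coeff i) ∧
      ∀ t : ℝ, 0 ≤ t → a n t ≤ P.eval t * Real.exp (-lam * t) * K :=
  stmt10_general lam K hK P0 p hP0 hp a c C ha_nonneg hc hC h0 hrec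
end
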